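/- Let V be a finite type and let k be a positive natural number. Let O be a finite family of pairwise disjoint nonempty finite subsets of V, let C be a finite family of finite subsets of V each of cardinality at most k, and let ω be a nonnegative real-valued weight function on finite subsets of V. Suppose there is a map f : O → C such that for every o ∈ O, the set f(o) intersects o and ω(o) ≤ ω(f(o)). Then ∑_{o ∈ O} ω(o) ≤ k · ∑_{c ∈ C} ω(c). In other words, the greedy algorithm for the kidney exchange problem with maximum cycle size k is a 1/k-approximation. -/

import Mathlib

/-!
Each vertex lies in at most one cycle of the disjoint family `O`, so a cycle `c` of size at most
`k` can be met by at most `k` cycles of `O`. Charging every `o ∈ O` to `f o`, each `c ∈ C` is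
charged at most `k` times, and each charge is at most `ω c`.
-/

open Finset

theorem Finset.card_le_card_of_pairwiseDisjoint_of_inter_nonempty {α : Type*} [DecidableEq α]
    {s : Finset (Finset α)} {c : Finset α} (hs : (s : Set (Finset α)).PairwiseDisjoint id)
    (hc : ∀ o ∈ s, (c ∩ o).Nonempty) : #s ≤ #c := by
  refine card_le_card_of_forall_subsingleton (fun o v => v ∈ o) (fun o ho => ?_) ?_
  · obtain ⟨v, hv⟩ := hc o ho
    exact ⟨v, mem_inter.mp hv⟩
  · intro v _ o₁ ⟨ho₁, hv₁⟩ o₂ ⟨ho₂, hv₂⟩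
    by_contra hne
    exact disjoint_left.mp (hs ho₁ ho₂ hne) hv₁ hv₂

theorem Finset.sum_le_mul_sum_of_card_fiber_le {ι κ R : Type*} [DecidableEq κ] [CommSemiring R]
    [PartialOrder R] [IsOrderedRing R] {s : Finset ι} {t : Finset κ} {g : ι → κ}
    {w : ι → R} {v : κ → R} (k : ℕ) (hg : ∀ i ∈ s, g i ∈ t) (hw : ∀ i ∈ s, w i ≤ v (g i))
    (hv : ∀ j ∈ t, 0 ≤ v j) (hfiber : ∀ j ∈ t, #{i ∈ s | g i = j} ≤ k) :
    ∑ i ∈ s, w i ≤ k * ∑ j ∈ t, v j :=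
  calc ∑ i ∈ s, w i
      ≤ ∑ i ∈ s, v (g i) := sum_le_sum hw
    _ = ∑ j ∈ t, ∑ i ∈ s with g i = j, v j := by
        rw [← sum_fiberwise_of_maps_to hg]
        refine sum_congr rfl fun j _ => sum_congr rfl fun i hi => ?_
        rw [(mem_filter.mp hi).2]
    _ = ∑ j ∈ t, (#{i ∈ s | g i = j} : R) * v j := by simp only [sum_const, nsmul_eq_mul]
    _ ≤ ∑ j ∈ t, (k : R) * v j :=
        sum_le_sum fun j hj => mul_le_mul_of_nonneg_right (Nat.mono_cast (hfiber j hj)) (hv j hj)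
    _ = k * ∑ j ∈ t, v j := (mul_sum ..).symm

theorem greedy_k_approx_general {V : Type*} [DecidableEq V]
    (k : ℕ)
    (O C : Finset (Finset V))
    (hO_disj : (O : Set (Finset V)).Pairwise (Function.onFun Disjoint id))
    (hC_card : ∀ c ∈ C, c.card ≤ k)
    (ω : Finset V → ℝ) (hω : ∀ s : Finset V, 0 ≤ ω s)
    (f : Finset V → Finset V)
    (hf_mem : ∀ o ∈ O, f o ∈ C)
    (hf_inter : ∀ o ∈ O, (f o ∩ o).Nonempty)
    (hf_wt : ∀ o ∈ O, ω o ≤ ω (f o)) :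
    ∑ o ∈ O, ω o ≤ (k : ℝ) * ∑ c ∈ C, ω c := by
  refine sum_le_mul_sum_of_card_fiber_le k hf_mem hf_wt (fun c _ => hω c) fun c hc => ?_
  have hfiber_disj : (({o ∈ O | f o = c} : Finset _) : Set (Finset V)).PairwiseDisjoint id :=
    hO_disj.mono (coe_subset.mpr (filter_subset _ _))
  refine (card_le_card_of_pairwiseDisjoint_of_inter_nonempty hfiber_disj fun o ho => ?_).trans
    (hC_card c hc)
  obtain ⟨hoO, rfl⟩ := mem_filter.mp ho
  exact hf_inter o hoO

/-- The greedy algorithm for the kidney exchange problem with maximum cycle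
size `k` is a 1/k-approximation. -/
theorem greedy_k_approx {V : Type*} [Fintype V] [DecidableEq V]
    (k : ℕ) (hk : 0 < k)
    (O C : Finset (Finset V))
    (hO_disj : (O : Set (Finset V)).Pairwise (Function.onFun Disjoint id))
    (hO_ne : ∀ o ∈ O, o.Nonempty)
    (hC_card : ∀ c ∈ C, c.card ≤ k)
    (ω : Finset V → ℝ) (hω : ∀ s : Finset V, 0 ≤ ω s)
    (f : Finset V → Finset V)
    (hf_mem : ∀ o ∈ O, f o ∈ C)
    (hf_inter : ∀ o ∈ O, (f o ∩ o).Nonempty)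
    (hf_wt : ∀ o ∈ O, ω o ≤ ω (f o)) :
    ∑ o ∈ O, ω o ≤ (k : ℝ) * ∑ c ∈ C, ω c :=
  greedy_k_approx_general k O C hO_disj hC_card ω hω f hf_mem hf_inter hf_wt
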